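/- Let ρ₁, ρ₂ be positive semidefinite operators on a finite-dimensional Hilbert space H with trace at most 1. The following are equivalent: (1) ρ₁ = ρ₂; (2) there exists an orthonormal basis B = {|i⟩} of H and a coupling σ for (ρ₁, ρ₂) whose support is contained in span{|i⟩⊗|i⟩ : i}; (3) there exists a coupling σ for (ρ₁, ρ₂) whose support is contained in the symmetric subspace of H ⊗ H (the +1 eigenspace of the swap operator S). -/

import Mathlib

open Matrix
open scoped ComplexOrder

noncomputable section

def ptr2 {n m : Type*} [Fintype m] (ρ : Matrix (n × m) (n × m) ℂ) : Matrix n n ℂ :=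
  Matrix.of fun i j => ∑ k, ρ (i, k) (j, k)

def ptr1 {n m : Type*} [Fintype n] (ρ : Matrix (n × m) (n × m) ℂ) : Matrix m m ℂ :=
  Matrix.of fun i j => ∑ k, ρ (k, i) (k, j)

/-- The swap operator S on H ⊗ H, S(φ ⊗ ψ) = ψ ⊗ φ. -/
def swapMat (n : Type*) [DecidableEq n] : Matrix (n × n) (n × n) ℂ :=
  Matrix.of fun a b => if a.1 = b.2 ∧ a.2 = b.1 then 1 else 0

lemma swap_mul_apply {n : Type*} [Fintype n] [DecidableEq n] {m : Type*}
    (M : Matrix (n × n) m ℂ) (a : n × n) (b : m) :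
    (swapMat n * M) a b = M (a.2, a.1) b := by
  rw [Matrix.mul_apply]
  rw [Finset.sum_eq_single (a.2, a.1)]
  · simp [swapMat]
  · rintro ⟨c1, c2⟩ - hc
    simp only [swapMat, Matrix.of_apply]
    rw [if_neg, zero_mul]
    rintro ⟨h1, h2⟩
    exact hc (by simp [Prod.ext_iff, ← h1, ← h2])
  · intro h; exact absurd (Finset.mem_univ _) h

lemma mul_swap_apply {n : Type*} [Fintype n] [DecidableEq n] {m : Type*}
    (M : Matrix m (n × n) ℂ) (a : m) (b : n × n) :
    (M * swapMat n) a b = M a (b.2, b.1) := by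
  rw [Matrix.mul_apply]
  rw [Finset.sum_eq_single (b.2, b.1)]
  · simp [swapMat]
  · rintro ⟨c1, c2⟩ - hc
    simp only [swapMat, Matrix.of_apply]
    rw [if_neg, mul_zero]
    rintro ⟨h1, h2⟩
    exact hc (by simp [Prod.ext_iff, h1, h2])
  · intro h; exact absurd (Finset.mem_univ _) h

lemma swapMat_conjTranspose {n : Type*} [DecidableEq n] :
    (swapMat n)ᴴ = swapMat n := by
  ext a b
  simp only [Matrix.conjTranspose_apply, swapMat, Matrix.of_apply]
  by_cases h : a.1 = b.2 ∧ a.2 = b.1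
  · rw [if_pos ⟨h.2.symm, h.1.symm⟩, if_pos h]; simp
  · rw [if_neg (fun hh => h ⟨hh.2.symm, hh.1.symm⟩), if_neg h]; simp

/-- A PSD matrix fixed by left multiplication by the swap has equal partial traces. -/
lemma marg_eq {n : Type*} [Fintype n] [DecidableEq n] {σ : Matrix (n × n) (n × n) ℂ}
    (hσ : σ.PosSemidef) (hs : swapMat n * σ = σ) : ptr1 σ = ptr2 σ := by
  have herm : σᴴ = σ := hσ.1
  have hs2 : σ * swapMat n = σ := by
    have := congrArg Matrix.conjTranspose hs
    rwa [Matrix.conjTranspose_mul, herm, swapMat_conjTranspose] at this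
  have key : ∀ a b : n × n, σ (a.2, a.1) (b.2, b.1) = σ a b := by
    intro a b
    have h1 : σ (a.2, a.1) (b.2, b.1) = σ a (b.2, b.1) := by
      rw [← swap_mul_apply σ a (b.2, b.1), hs]
    have h2 : σ a (b.2, b.1) = σ a b := by
      rw [← mul_swap_apply σ a b, hs2]
    rw [h1, h2]
  ext i j
  simp only [ptr1, ptr2, Matrix.of_apply]
  exact Finset.sum_congr rfl fun k _ => key (i, k) (j, k)

/-- The main construction: a diagonal coupling for (ρ, ρ). -/
lemma construct {n : Type*} [Fintype n] [DecidableEq n] (ρ : Matrix n n ℂ)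
    (h : ρ.PosSemidef) :
    ∃ (e : n → n → ℂ) (σ : Matrix (n × n) (n × n) ℂ),
      (∀ i j, ∑ k, star (e i k) * e j k = if i = j then (1 : ℂ) else 0) ∧
      σ.PosSemidef ∧ ptr2 σ = ρ ∧ ptr1 σ = ρ ∧
      (∑ i, Matrix.of fun a b =>
          (e i a.1 * e i a.2) * star (e i b.1 * e i b.2)) * σ = σ ∧
      swapMat n * σ = σ := by
  have hH := h.1
  set u : Matrix n n ℂ := (hH.eigenvectorUnitary : Matrix n n ℂ) with hu_def
  have hu1 : star u * u = 1 := Matrix.mem_unitaryGroup_iff'.mp hH.eigenvectorUnitary.2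
  have ip : ∀ i j, (∑ k, star (u k i) * u k j) = if i = j then (1 : ℂ) else 0 := by
    intro i j
    have := congrFun (congrFun hu1 i) j
    simpa [Matrix.mul_apply, Matrix.star_eq_conjTranspose, Matrix.conjTranspose_apply,
      Matrix.one_apply] using this
  set lam := hH.eigenvalues with hlam_def
  have hlam : ∀ i, 0 ≤ lam i := fun i => h.eigenvalues_nonneg i
  have hρ : ∀ x y, ρ x y = ∑ i, u x i * (lam i : ℂ) * star (u y i) := by
    intro x y
    conv_lhs => rw [hH.spectral_theorem, Unitary.conjStarAlgAut_apply]
    rw [Matrix.mul_apply]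
    refine Finset.sum_congr rfl fun i _ => ?_
    rw [Matrix.mul_diagonal]
    simp only [Matrix.star_eq_conjTranspose, Matrix.conjTranspose_apply, Function.comp_apply]
    rfl
  set W : Matrix n (n × n) ℂ := Matrix.of (fun i a => star (u a.1 i * u a.2 i)) with hW
  have hWW : W * Wᴴ = 1 := by
    ext i j
    rw [Matrix.mul_apply, Matrix.one_apply]
    calc ∑ c : n × n, W i c * Wᴴ c j
        = ∑ c₁, ∑ c₂, (star (u c₁ i) * u c₁ j) * (star (u c₂ i) * u c₂ j) := by
          rw [Fintype.sum_prod_type]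
          refine Finset.sum_congr rfl fun c₁ _ => Finset.sum_congr rfl fun c₂ _ => ?_
          simp only [hW, Matrix.conjTranspose_apply, Matrix.of_apply, star_star, star_mul']
          ring
      _ = (∑ c₁, star (u c₁ i) * u c₁ j) * (∑ c₂, star (u c₂ i) * u c₂ j) := by
          rw [Finset.sum_mul_sum]
      _ = if i = j then 1 else 0 := by rw [ip]; split_ifs <;> simp
  set D : Matrix n n ℂ := Matrix.diagonal (fun i => (lam i : ℂ)) with hD
  have hDpsd : D.PosSemidef := by
    refine Matrix.posSemidef_diagonal_iff.mpr fun i => ?_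
    exact_mod_cast hlam i
  set σ : Matrix (n × n) (n × n) ℂ := Wᴴ * D * W with hσdef
  have hσ : ∀ a b, σ a b =
      ∑ i, (u a.1 i * u a.2 i) * (lam i : ℂ) * star (u b.1 i * u b.2 i) := by
    intro a b
    rw [hσdef, Matrix.mul_apply]
    refine Finset.sum_congr rfl fun i _ => ?_
    rw [hD, Matrix.mul_diagonal]
    simp only [hW, Matrix.conjTranspose_apply, Matrix.of_apply, star_star]
  refine ⟨fun i k => u k i, σ, ?_, ?_, ?_, ?_, ?_, ?_⟩
  · exact ip
  · exact hDpsd.conjTranspose_mul_mul_same W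
  · ext x y
    simp only [ptr2, Matrix.of_apply]
    rw [hρ x y]
    calc ∑ k, σ (x, k) (y, k)
        = ∑ k, ∑ i, (u x i * (lam i : ℂ) * star (u y i)) * (star (u k i) * u k i) := by
          refine Finset.sum_congr rfl fun k _ => ?_
          rw [hσ]
          refine Finset.sum_congr rfl fun i _ => ?_
          simp only [star_mul']
          ring
      _ = ∑ i, (u x i * (lam i : ℂ) * star (u y i)) * (∑ k, star (u k i) * u k i) := by
          rw [Finset.sum_comm]
          exact Finset.sum_congr rfl fun i _ => (Finset.mul_sum _ _ _).symm
      _ = ∑ i, u x i * (lam i : ℂ) * star (u y i) := by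
          refine Finset.sum_congr rfl fun i _ => ?_
          rw [ip, if_pos rfl, mul_one]
  · ext x y
    simp only [ptr1, Matrix.of_apply]
    rw [hρ x y]
    calc ∑ k, σ (k, x) (k, y)
        = ∑ k, ∑ i, (u x i * (lam i : ℂ) * star (u y i)) * (star (u k i) * u k i) := by
          refine Finset.sum_congr rfl fun k _ => ?_
          rw [hσ]
          refine Finset.sum_congr rfl fun i _ => ?_
          simp only [star_mul']
          ring
      _ = ∑ i, (u x i * (lam i : ℂ) * star (u y i)) * (∑ k, star (u k i) * u k i) := by
          rw [Finset.sum_comm]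
          exact Finset.sum_congr rfl fun i _ => (Finset.mul_sum _ _ _).symm
      _ = ∑ i, u x i * (lam i : ℂ) * star (u y i) := by
          refine Finset.sum_congr rfl fun i _ => ?_
          rw [ip, if_pos rfl, mul_one]
  · have hP : (∑ i, Matrix.of fun a b : n × n =>
        (u a.1 i * u a.2 i) * star (u b.1 i * u b.2 i)) = Wᴴ * W := by
      ext a b
      rw [Matrix.sum_apply, Matrix.mul_apply]
      refine Finset.sum_congr rfl fun i _ => ?_
      simp only [hW, Matrix.conjTranspose_apply, Matrix.of_apply, star_star]
    show (∑ i, Matrix.of fun a b : n × n =>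
        (u a.1 i * u a.2 i) * star (u b.1 i * u b.2 i)) * σ = σ
    rw [hP, hσdef]
    have : Wᴴ * W * (Wᴴ * D * W) = Wᴴ * ((W * Wᴴ) * (D * W)) := by
      simp only [Matrix.mul_assoc]
    rw [this, hWW, Matrix.one_mul, ← Matrix.mul_assoc]
  · have hsW : swapMat n * Wᴴ = Wᴴ := by
      ext a j
      rw [swap_mul_apply]
      simp only [hW, Matrix.conjTranspose_apply, Matrix.of_apply, star_star]
      ring
    calc swapMat n * σ = (swapMat n * Wᴴ) * D * W := by
          rw [hσdef]; simp only [Matrix.mul_assoc]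
      _ = σ := by rw [hsW, hσdef]

/-- Characterization of liftings of equality: for partial density operators ρ₁, ρ₂,
the following are equivalent: (1) ρ₁ = ρ₂; (2) there is an orthonormal basis {eᵢ} and a
coupling supported in span{eᵢ ⊗ eᵢ}; (3) there is a coupling supported in the symmetric
subspace (range of (I + S)/2). -/
theorem lifting_of_equality {n : Type*} [Fintype n] [DecidableEq n]
    (ρ₁ ρ₂ : Matrix n n ℂ) (h₁ : ρ₁.PosSemidef) (h₂ : ρ₂.PosSemidef)
    (ht₁ : ρ₁.trace.re ≤ 1) (ht₂ : ρ₂.trace.re ≤ 1) :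
    (ρ₁ = ρ₂ ↔
      ∃ (e : n → n → ℂ) (σ : Matrix (n × n) (n × n) ℂ),
        (∀ i j, ∑ k, star (e i k) * e j k = if i = j then (1 : ℂ) else 0) ∧
        σ.PosSemidef ∧ ptr2 σ = ρ₁ ∧ ptr1 σ = ρ₂ ∧
        (∑ i, Matrix.of fun a b =>
            (e i a.1 * e i a.2) * star (e i b.1 * e i b.2)) * σ = σ) ∧
    (ρ₁ = ρ₂ ↔
      ∃ σ : Matrix (n × n) (n × n) ℂ,
        σ.PosSemidef ∧ ptr2 σ = ρ₁ ∧ ptr1 σ = ρ₂ ∧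
        ((1 / 2 : ℂ) • (1 + swapMat n)) * σ = σ) := by
  constructor
  · constructor
    · intro hρ
      obtain ⟨e, σ, he, hpsd, hp2, hp1, hP, _⟩ := construct ρ₁ h₁
      exact ⟨e, σ, he, hpsd, hp2, hρ ▸ hp1, hP⟩
    · rintro ⟨e, σ, he, hpsd, hp2, hp1, hPσ⟩
      have hSP : swapMat n * (∑ i, Matrix.of fun a b : n × n =>
          (e i a.1 * e i a.2) * star (e i b.1 * e i b.2)) =
          (∑ i, Matrix.of fun a b : n × n =>
          (e i a.1 * e i a.2) * star (e i b.1 * e i b.2)) := by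
        ext a b
        rw [swap_mul_apply, Matrix.sum_apply, Matrix.sum_apply]
        refine Finset.sum_congr rfl fun i _ => ?_
        simp only [Matrix.of_apply]
        ring
      have hSσ : swapMat n * σ = σ := by
        conv_lhs => rw [← hPσ]
        rw [← Matrix.mul_assoc, hSP, hPσ]
      rw [← hp2, ← hp1]
      exact (marg_eq hpsd hSσ).symm
  · constructor
    · intro hρ
      obtain ⟨e, σ, he, hpsd, hp2, hp1, _, hS⟩ := construct ρ₁ h₁
      refine ⟨σ, hpsd, hp2, hρ ▸ hp1, ?_⟩
      rw [Matrix.smul_mul, Matrix.add_mul, Matrix.one_mul, hS, ← two_smul ℂ σ, smul_smul]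
      norm_num
    · rintro ⟨σ, hpsd, hp2, hp1, hsym⟩
      have h' : (1 / 2 : ℂ) • (σ + swapMat n * σ) = σ := by
        have h0 := hsym
        rwa [Matrix.smul_mul, Matrix.add_mul, Matrix.one_mul] at h0
      have h2 : σ + swapMat n * σ = (2 : ℂ) • σ := by
        calc σ + swapMat n * σ
            = (2 : ℂ) • ((1 / 2 : ℂ) • (σ + swapMat n * σ)) := by
              rw [smul_smul]; norm_num
          _ = (2 : ℂ) • σ := by rw [h']
      have hSσ : swapMat n * σ = σ := by
        have : swapMat n * σ = (2 : ℂ) • σ - σ := by rw [← h2]; abel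
        rw [this, two_smul]; abel
      rw [← hp2, ← hp1]
      exact (marg_eq hpsd hSσ).symm
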